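/- arXiv:1210.0686 — 4 statements merged into one kernel-verified Lean document; each statement's English description precedes it below -/
import Mathlib

section
/- Let Z2(x) = ρ Z1(x) + δ(x) on an index set Q, where Z1 and δ are independent centered Gaussian processes with kernels σ1² r1 and σ2² r2, and ρ ∈ R. Let D be a finite set of points in Q. Then for any x, x' ∈ Q, the conditional covariance of Z2 given the values of both Z1 and Z2 on D satisfies Cov(Z2(x), Z2(x') | Z1(D), Z2(D)) = ρ² Cov(Z1(x), Z1(x') | Z1(D)) + σ2² (r2(x,x') - r2(x,D) R2^{-1} r2(D,x')), where R2 = (r2(d,d'))_{d,d'∈D} is assumed invertible. -/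
open Matrix

/-- Let `Z2 = ρ Z1 + δ` with `Z1, δ` independent centered Gaussian processes on `Q` with
kernels `σ1² r1` and `σ2² r2`, and `D ⊂ Q` finite (embedded by `e`). The conditional
covariance of `Z2` given `(Z1(D), Z2(D))` — given by the Gaussian conditioning formula
`Cov(Z2(x),Z2(x')) - v(x)ᵀ Γ⁻¹ v(x')` where `Γ` is the covariance matrix of
`(Z1(D), Z2(D))` and `v(x)` the vector of covariances of `Z2(x)` with the observations —
satisfies `Cov(Z2(x),Z2(x') | Z1(D), Z2(D)) = ρ² Cov(Z1(x),Z1(x') | Z1(D))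
+ σ2² (r2(x,x') - r2(x,D) R2⁻¹ r2(D,x'))`. -/
theorem cokriging_conditional_covariance_recursion
    {Q D : Type*} [Fintype D] [DecidableEq D]
    (r1 r2 : Q → Q → ℝ) (hr1 : ∀ x y, r1 x y = r1 y x) (hr2 : ∀ x y, r2 x y = r2 y x)
    (σ1sq σ2sq : ℝ) (hσ1 : 0 < σ1sq) (hσ2 : 0 < σ2sq) (ρ : ℝ) (e : D → Q)
    (R1 R2 : Matrix D D ℝ)
    (hR1 : R1 = Matrix.of fun d d' => r1 (e d) (e d'))
    (hR2 : R2 = Matrix.of fun d d' => r2 (e d) (e d'))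
    (hR1inv : IsUnit R1.det) (hR2inv : IsUnit R2.det)
    (Γ : Matrix (D ⊕ D) (D ⊕ D) ℝ)
    (hΓ : Γ = Matrix.fromBlocks (σ1sq • R1) ((ρ * σ1sq) • R1) ((ρ * σ1sq) • R1)
        ((ρ ^ 2 * σ1sq) • R1 + σ2sq • R2))
    (hΓinv : IsUnit Γ.det)
    (v : Q → D ⊕ D → ℝ)
    (hv : v = fun x => Sum.elim (fun d => ρ * σ1sq * r1 x (e d))
        (fun d => ρ ^ 2 * σ1sq * r1 x (e d) + σ2sq * r2 x (e d)))
    (x x' : Q) :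
    (ρ ^ 2 * σ1sq * r1 x x' + σ2sq * r2 x x') - v x ⬝ᵥ Γ⁻¹.mulVec (v x')
      = ρ ^ 2 * (σ1sq * r1 x x'
            - (fun d => σ1sq * r1 x (e d)) ⬝ᵥ
                (σ1sq • R1)⁻¹.mulVec fun d => σ1sq * r1 (e d) x')
        + σ2sq * (r2 x x'
            - (fun d => r2 x (e d)) ⬝ᵥ R2⁻¹.mulVec fun d => r2 (e d) x') := by
  have hσ1' : σ1sq ≠ 0 := hσ1.ne'
  have hσ2' : σ2sq ≠ 0 := hσ2.ne'
  set A := σ1sq • R1 with hA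
  set S := σ2sq • R2 with hS
  have hAdet : IsUnit A.det := by
    rw [hA, Matrix.det_smul]
    exact ((isUnit_iff_ne_zero.2 hσ1').pow _).mul hR1inv
  have hSdet : IsUnit S.det := by
    rw [hS, Matrix.det_smul]
    exact ((isUnit_iff_ne_zero.2 hσ2').pow _).mul hR2inv
  have hAA : A * A⁻¹ = 1 := Matrix.mul_nonsing_inv _ hAdet
  have hSS : S * S⁻¹ = 1 := Matrix.mul_nonsing_inv _ hSdet
  have hSinv : S⁻¹ = σ2sq⁻¹ • R2⁻¹ := by
    apply Matrix.inv_eq_right_inv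
    rw [hS, Matrix.smul_mul, Matrix.mul_smul, smul_smul,
      Matrix.mul_nonsing_inv _ hR2inv, mul_inv_cancel₀ hσ2', one_smul]
  have hG : Γ⁻¹ = fromBlocks (A⁻¹ + (ρ ^ 2) • S⁻¹) ((-ρ) • S⁻¹) ((-ρ) • S⁻¹) S⁻¹ := by
    apply Matrix.inv_eq_right_inv
    have h1 : (ρ * σ1sq) • R1 = ρ • A := by rw [hA, smul_smul]
    have h2 : (ρ ^ 2 * σ1sq) • R1 = ρ ^ 2 • A := by rw [hA, smul_smul]
    rw [hΓ, h1, h2, Matrix.fromBlocks_multiply, ← Matrix.fromBlocks_one]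
    rw [Matrix.fromBlocks_inj]
    refine ⟨?_, ?_, ?_, ?_⟩ <;>
      · simp only [Matrix.mul_add, Matrix.add_mul, Matrix.mul_smul, Matrix.smul_mul,
          smul_smul, hAA, hSS]
        module
  have hr1' : ∀ d, r1 (e d) x' = r1 x' (e d) := fun d => hr1 _ _
  have hr2' : ∀ d, r2 (e d) x' = r2 x' (e d) := fun d => hr2 _ _
  rw [hG, hv, hSinv]
  simp only [hr1', hr2']
  simp only [Matrix.fromBlocks_mulVec, Sum.elim_comp_inl, Sum.elim_comp_inr,
    sumElim_dotProduct_sumElim]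
  have e1 : ∀ y : Q, (fun d => ρ * σ1sq * r1 y (e d))
      = (ρ * σ1sq) • (fun d => r1 y (e d)) := by
    intro y; funext d; simp [smul_eq_mul]
  have e2 : ∀ y : Q, (fun d => ρ ^ 2 * σ1sq * r1 y (e d) + σ2sq * r2 y (e d))
      = (ρ ^ 2 * σ1sq) • (fun d => r1 y (e d)) + σ2sq • (fun d => r2 y (e d)) := by
    intro y; funext d; simp [smul_eq_mul]
  have e3 : (fun d => σ1sq * r1 x (e d)) = σ1sq • (fun d => r1 x (e d)) := by
    funext d; simp [smul_eq_mul]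
  have e4 : (fun d => σ1sq * r1 x' (e d)) = σ1sq • (fun d => r1 x' (e d)) := by
    funext d; simp [smul_eq_mul]
  rw [e1, e1, e2, e2, e3, e4]
  simp only [Matrix.mulVec_add, Matrix.mulVec_smul, Matrix.add_mulVec, Matrix.smul_mulVec,
    dotProduct_add, add_dotProduct, dotProduct_smul, smul_dotProduct, smul_eq_mul,
    smul_smul, smul_add]
  field_simp
  ring
end

section
/- Let Z2(x) = ρ Z1(x) + δ(x) as above with D2 ⊆ D1 finite subsets of Q, where Z1(D1) = z1 and Z2(D2) = z2 are observed. Then the conditional mean satisfies the recursion E[Z2(x) | Z1(D1)=z1, Z2(D2)=z2] = ρ E[Z1(x) | Z1(D1)=z1] + r2(x,D2) R2^{-1} (z2 - ρ z1(D2)), where z1(D2) denotes the restriction of z1 to D2 and R2 = (r2(d,d'))_{d,d'∈D2} is invertible. -/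
open Matrix

/-- Let `Z2 = ρ Z1 + δ` with `Z1, δ` independent centered Gaussian processes on `Q` with
kernels `σ1² r1` and `σ2² r2`, and nested finite designs `D2 ⊆ D1 ⊂ Q` (embeddings
`e : D1 → Q` and `ι : D2 → D1`). The conditional mean of `Z2(x)` given
`Z1(D1) = z1, Z2(D2) = z2` — given by the Gaussian conditioning formula `v(x)ᵀ Γ⁻¹ (z1,z2)`
where `Γ` is the covariance matrix of the observations and `v(x)` the covariance vector —
satisfies the recursion `E[Z2(x)|z1,z2] = ρ E[Z1(x)|z1] + r2(x,D2) R2⁻¹ (z2 - ρ z1(D2))`. -/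
theorem cokriging_conditional_mean_recursion
    {Q D1 D2 : Type*} [Fintype D1] [Fintype D2] [DecidableEq D1] [DecidableEq D2]
    (r1 r2 : Q → Q → ℝ) (hr1 : ∀ x y, r1 x y = r1 y x) (hr2 : ∀ x y, r2 x y = r2 y x)
    (σ1sq σ2sq : ℝ) (hσ1 : 0 < σ1sq) (hσ2 : 0 < σ2sq) (ρ : ℝ)
    (e : D1 → Q) (ι : D2 → D1) (hι : Function.Injective ι)
    (R1 : Matrix D1 D1 ℝ) (hR1 : R1 = Matrix.of fun d d' => r1 (e d) (e d'))
    (R2 : Matrix D2 D2 ℝ) (hR2 : R2 = Matrix.of fun d d' => r2 (e (ι d)) (e (ι d')))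
    (hR1inv : IsUnit R1.det) (hR2inv : IsUnit R2.det)
    (Γ : Matrix (D1 ⊕ D2) (D1 ⊕ D2) ℝ)
    (hΓ : Γ = Matrix.fromBlocks (σ1sq • R1)
        (Matrix.of fun d d' => ρ * σ1sq * r1 (e d) (e (ι d')))
        (Matrix.of fun d d' => ρ * σ1sq * r1 (e (ι d)) (e d'))
        (Matrix.of fun d d' =>
          ρ ^ 2 * σ1sq * r1 (e (ι d)) (e (ι d')) + σ2sq * r2 (e (ι d)) (e (ι d'))))
    (hΓinv : IsUnit Γ.det)
    (v : Q → D1 ⊕ D2 → ℝ)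
    (hv : v = fun x => Sum.elim (fun d => ρ * σ1sq * r1 x (e d))
        (fun d => ρ ^ 2 * σ1sq * r1 x (e (ι d)) + σ2sq * r2 x (e (ι d))))
    (z1 : D1 → ℝ) (z2 : D2 → ℝ) (x : Q) :
    v x ⬝ᵥ Γ⁻¹.mulVec (Sum.elim z1 z2)
      = ρ * ((fun d => σ1sq * r1 x (e d)) ⬝ᵥ (σ1sq • R1)⁻¹.mulVec z1)
        + (fun d => r2 x (e (ι d))) ⬝ᵥ
            R2⁻¹.mulVec fun d => z2 d - ρ * z1 (ι d) := by
  classical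
  -- kernel vectors and the selection matrix
  set k1 : D1 → ℝ := fun d => r1 x (e d) with hk1
  set k2 : D2 → ℝ := fun d => r2 x (e (ι d)) with hk2
  set S : Matrix D2 D1 ℝ := Matrix.of (fun d d1 => if ι d = d1 then (1:ℝ) else 0) with hSdef
  have hSmul : ∀ w : D1 → ℝ, S *ᵥ w = fun d => w (ι d) := by
    intro w; funext d
    simp [hSdef, Matrix.mulVec, dotProduct, ite_mul]
  have hR1T : R1ᵀ = R1 := by
    ext d d'; simp only [hR1, Matrix.transpose_apply, Matrix.of_apply]; rw [hr1]
  have hR2T : R2ᵀ = R2 := by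
    ext d d'; simp only [hR2, Matrix.transpose_apply, Matrix.of_apply]; rw [hr2]
  have hRS : R1 * Sᵀ = Matrix.of fun d d2 => r1 (e d) (e (ι d2)) := by
    ext d d2
    simp [Matrix.mul_apply, hSdef, hR1, mul_ite]
  have hSR : S * R1 = Matrix.of fun d d' => r1 (e (ι d)) (e d') := by
    ext d d'
    simp [Matrix.mul_apply, hSdef, hR1, ite_mul]
  have hSRS : S * R1 * Sᵀ = Matrix.of fun d d' => r1 (e (ι d)) (e (ι d')) := by
    rw [hSR]
    ext d d'
    simp [Matrix.mul_apply, hSdef, mul_ite]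
  -- block decomposition of Γ
  have hΓ' : Γ = Matrix.fromBlocks (σ1sq • R1) ((ρ * σ1sq) • (R1 * Sᵀ))
      ((ρ * σ1sq) • (S * R1)) ((ρ ^ 2 * σ1sq) • (S * R1 * Sᵀ) + σ2sq • R2) := by
    rw [hΓ, hRS, hSRS, hSR, hR2]
    ext i j
    rcases i with d | d <;> rcases j with d' | d' <;>
      simp [Matrix.fromBlocks, Matrix.smul_apply, smul_eq_mul]
  -- Γ is symmetric
  have hΓT : Γᵀ = Γ := by
    rw [hΓ', Matrix.fromBlocks_transpose]
    simp only [Matrix.transpose_smul, Matrix.transpose_add, Matrix.transpose_mul,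
      Matrix.transpose_transpose, hR1T, hR2T, Matrix.mul_assoc]
  -- the candidate solution u
  set a : D1 → ℝ := R1⁻¹ *ᵥ k1 with hadef
  set b : D2 → ℝ := R2⁻¹ *ᵥ k2 with hbdef
  have ha : R1 *ᵥ a = k1 := by
    rw [hadef, Matrix.mulVec_mulVec, Matrix.mul_nonsing_inv _ hR1inv, Matrix.one_mulVec]
  have hb : R2 *ᵥ b = k2 := by
    rw [hbdef, Matrix.mulVec_mulVec, Matrix.mul_nonsing_inv _ hR2inv, Matrix.one_mulVec]
  set u1 : D1 → ℝ := ρ • a - ρ • (Sᵀ *ᵥ b) with hu1def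
  set u : D1 ⊕ D2 → ℝ := Sum.elim u1 b with hudef
  have hΓu : Γ *ᵥ u = v x := by
    rw [hΓ', hv, hudef, Matrix.fromBlocks_mulVec]
    simp only [Sum.elim_comp_inl, Sum.elim_comp_inr]
    have e1 : (fun d => ρ * σ1sq * r1 x (e d)) = (ρ * σ1sq) • k1 := rfl
    have e2 : (fun d => ρ ^ 2 * σ1sq * r1 x (e (ι d)) + σ2sq * r2 x (e (ι d)))
        = (ρ ^ 2 * σ1sq) • (S *ᵥ k1) + σ2sq • k2 := by
      rw [hSmul]; rfl
    rw [e1, e2]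
    refine congrArg₂ Sum.elim ?_ ?_
    · rw [hu1def]
      simp only [Matrix.smul_mulVec, Matrix.mulVec_sub, Matrix.mulVec_smul,
        ← Matrix.mulVec_mulVec, ha]
      module
    · rw [hu1def, Matrix.add_mulVec]
      simp only [Matrix.smul_mulVec, Matrix.mulVec_sub, Matrix.mulVec_smul,
        ← Matrix.mulVec_mulVec, ha, hb]
      module
  have hΓiu : Γ⁻¹ *ᵥ v x = u := by
    rw [← hΓu, Matrix.mulVec_mulVec, Matrix.nonsing_inv_mul _ hΓinv, Matrix.one_mulVec]
  -- rewrite the LHS as u ⬝ᵥ (z1, z2)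
  have key : v x ⬝ᵥ Γ⁻¹ *ᵥ (Sum.elim z1 z2) = u ⬝ᵥ Sum.elim z1 z2 := by
    rw [Matrix.dotProduct_mulVec, ← Matrix.mulVec_transpose, Matrix.transpose_nonsing_inv,
      hΓT, hΓiu]
  rw [key, hudef, sumElim_dotProduct_sumElim]
  -- rewrite the first RHS term
  have hinv1 : (σ1sq • R1)⁻¹ = σ1sq⁻¹ • R1⁻¹ := by
    apply Matrix.inv_eq_right_inv
    rw [Matrix.smul_mul, Matrix.mul_smul, Matrix.mul_nonsing_inv _ hR1inv, smul_smul,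
      mul_inv_cancel₀ hσ1.ne', one_smul]
  have hterm1 : (fun d => σ1sq * r1 x (e d)) ⬝ᵥ (σ1sq • R1)⁻¹ *ᵥ z1 = a ⬝ᵥ z1 := by
    have e3 : (fun d => σ1sq * r1 x (e d)) = σ1sq • k1 := rfl
    rw [e3, hinv1, Matrix.smul_mulVec, smul_dotProduct,
      dotProduct_smul, smul_eq_mul, smul_eq_mul, ← mul_assoc,
      mul_inv_cancel₀ hσ1.ne', one_mul, Matrix.dotProduct_mulVec,
      ← Matrix.mulVec_transpose, Matrix.transpose_nonsing_inv, hR1T, hadef]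
  -- rewrite the second RHS term
  have hterm2 : (fun d => r2 x (e (ι d))) ⬝ᵥ R2⁻¹ *ᵥ (fun d => z2 d - ρ * z1 (ι d))
      = b ⬝ᵥ z2 - ρ * ((Sᵀ *ᵥ b) ⬝ᵥ z1) := by
    have e4 : (fun d => z2 d - ρ * z1 (ι d)) = z2 - ρ • (S *ᵥ z1) := by
      rw [hSmul]; rfl
    rw [show (fun d => r2 x (e (ι d))) = k2 from rfl, e4, Matrix.dotProduct_mulVec,
      ← Matrix.mulVec_transpose, Matrix.transpose_nonsing_inv, hR2T, ← hbdef,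
      dotProduct_sub, dotProduct_smul, smul_eq_mul,
      Matrix.dotProduct_mulVec, ← Matrix.mulVec_transpose]
  rw [hterm1, hterm2, hu1def, sub_dotProduct, smul_dotProduct,
    smul_dotProduct, smul_eq_mul, smul_eq_mul]
  ring
end

section
/- Let R be an n×n symmetric positive definite matrix, ξ a nonempty proper subset of indices, z ∈ R^n. Then z_ξ - R_{[ξ,-ξ]}(R_{[-ξ,-ξ]})^{-1} z_{-ξ} = ([R^{-1}]_{[ξ,ξ]})^{-1} [R^{-1} z]_{[ξ]}; that is, the vector of leave-ξ-out Gaussian conditional prediction errors equals the inverse of the (ξ,ξ)-block of R^{-1} applied to the ξ-rows of R^{-1} z. -/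
open Matrix

/-!
Write `R = [[A, B], [C, D]]` along `ξ ⊕ η` and `S = A - B D⁻¹ C` for the Schur complement of `D`.
Block inversion gives `[R⁻¹]_{ξξ} = S⁻¹`. On the other hand, if `z = R w` then
`z_ξ - B D⁻¹ z_η = (A w_ξ + B w_η) - B D⁻¹ (C w_ξ + D w_η) = S w_ξ`; taking `w = R⁻¹ z`
gives the identity.
-/

namespace Matrix

variable {m n α : Type*} [Fintype m] [Fintype n] [DecidableEq n] [CommRing α]

theorem inv_toBlocks₁₁_inv_fromBlocks [DecidableEq m] {A : Matrix m m α} {B : Matrix m n α}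
    {C : Matrix n m α} {D : Matrix n n α} (hM : IsUnit (fromBlocks A B C D)) (hD : IsUnit D) :
    ((fromBlocks A B C D)⁻¹.toBlocks₁₁)⁻¹ = A - B * D⁻¹ * C := by
  let := hM.invertible
  let := hD.invertible
  let := invertibleOfFromBlocks₂₂Invertible A B C D
  rw [← invOf_eq_nonsing_inv (fromBlocks A B C D), invOf_fromBlocks₂₂_eq, toBlocks_fromBlocks₁₁,
    invOf_eq_nonsing_inv, inv_inv_of_invertible, invOf_eq_nonsing_inv]

theorem fromBlocks_mulVec_sub_eq_schur_mulVec (A : Matrix m m α) (B : Matrix m n α)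
    (C : Matrix n m α) {D : Matrix n n α} (hD : IsUnit D) (w : m ⊕ n → α) :
    (fromBlocks A B C D *ᵥ w) ∘ Sum.inl - B *ᵥ D⁻¹ *ᵥ ((fromBlocks A B C D *ᵥ w) ∘ Sum.inr)
      = (A - B * D⁻¹ * C) *ᵥ (w ∘ Sum.inl) := by
  have hD_inv : D⁻¹ * D = 1 := nonsing_inv_mul D ((isUnit_iff_isUnit_det D).mp hD)
  rw [fromBlocks_mulVec, Sum.elim_comp_inl, Sum.elim_comp_inr, mulVec_add, mulVec_mulVec,
    mulVec_mulVec, hD_inv, one_mulVec, mulVec_add, mulVec_mulVec, ← Matrix.mul_assoc, sub_mulVec]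
  abel

end Matrix

theorem fast_cross_validation_errors_general {ξ η : Type*} [Fintype ξ] [Fintype η]
    [DecidableEq ξ] [DecidableEq η]
    (R : Matrix (ξ ⊕ η) (ξ ⊕ η) ℝ) (hR : R.PosDef) (z : ξ ⊕ η → ℝ) :
    (fun i => z (Sum.inl i))
        - R.toBlocks₁₂.mulVec ((R.toBlocks₂₂)⁻¹.mulVec fun j => z (Sum.inr j))
      = ((R⁻¹).toBlocks₁₁)⁻¹.mulVec fun i => (R⁻¹.mulVec z) (Sum.inl i) := by
  have hz : R *ᵥ (R⁻¹ *ᵥ z) = z := by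
    rw [mulVec_mulVec, mul_nonsing_inv R ((isUnit_iff_isUnit_det R).mp hR.isUnit), one_mulVec]
  obtain ⟨A, B, C, D, rfl⟩ : ∃ A B C D, R = fromBlocks A B C D :=
    ⟨_, _, _, _, (fromBlocks_toBlocks R).symm⟩
  have hD : IsUnit D := (hR.submatrix Sum.inr_injective).isUnit
  rw [inv_toBlocks₁₁_inv_fromBlocks hR.isUnit hD, toBlocks_fromBlocks₁₂, toBlocks_fromBlocks₂₂]
  have hschur := fromBlocks_mulVec_sub_eq_schur_mulVec A B C hD ((fromBlocks A B C D)⁻¹ *ᵥ z)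
  rwa [hz] at hschur

/-- Dubrule's fast cross-validation identity: for a symmetric positive definite `R`
(partitioned along `ξ ⊕ ξᶜ`) and `z ∈ ℝⁿ`, the leave-`ξ`-out Gaussian conditional
prediction errors `z_ξ - R_{ξ,-ξ} (R_{-ξ,-ξ})⁻¹ z_{-ξ}` equal
`([R⁻¹]_{ξξ})⁻¹ [R⁻¹ z]_ξ`. -/
theorem fast_cross_validation_errors {ξ η : Type*} [Fintype ξ] [Fintype η]
    [DecidableEq ξ] [DecidableEq η] [Nonempty ξ] [Nonempty η]
    (R : Matrix (ξ ⊕ η) (ξ ⊕ η) ℝ) (hR : R.PosDef) (z : ξ ⊕ η → ℝ) :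
    (fun i => z (Sum.inl i))
        - R.toBlocks₁₂.mulVec ((R.toBlocks₂₂)⁻¹.mulVec fun j => z (Sum.inr j))
      = ((R⁻¹).toBlocks₁₁)⁻¹.mulVec fun i => (R⁻¹.mulVec z) (Sum.inl i) :=
  fast_cross_validation_errors_general R hR z
end

section
/- Let Z2 = ρ Z1 + δ with Z1, δ independent centered Gaussian processes having kernels σ1² r1 and σ2² r2, and nested designs D2 ⊆ D1. Then when D2 = D1, the conditional distribution of Z2(x) given (Z1(D1), Z2(D2)) depends on the observations only through Z2(D2) and Z1(D1): specifically, E[Z2(x) | Z1(D1)=z1, Z2(D1)=z2] = ρ (E[Z1(x)|Z1(D1)=z1]) + r2(x,D1) R2^{-1}(z2 - ρ z1), which for prediction of Z2 uses z1 only via the term ρ E[Z1(x)|z1] and the residual z2 - ρ z1. -/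
open Matrix

private lemma symm_mulVec_dot {n : Type*} [Fintype n] (A : Matrix n n ℝ) (hA : Aᵀ = A)
    (w z : n → ℝ) : A.mulVec w ⬝ᵥ z = w ⬝ᵥ A.mulVec z := by
  rw [Matrix.dotProduct_mulVec, ← Matrix.mulVec_transpose, hA]

/-- Let `Z2 = ρ Z1 + δ` with `Z1, δ` independent centered Gaussian processes on `Q` with
kernels `σ1² r1` and `σ2² r2`, and equal designs `D2 = D1 = D` (embedded by `e`). The
conditional mean of `Z2(x)` given `Z1(D) = z1, Z2(D) = z2` — given by the Gaussian
conditioning formula `v(x)ᵀ Γ⁻¹ (z1, z2)` — equals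
`ρ E[Z1(x)|Z1(D)=z1] + r2(x,D) R2⁻¹ (z2 - ρ z1)`: the observations enter only through
`ρ E[Z1(x)|z1]` and the residual `z2 - ρ z1`. -/
theorem cokriging_conditional_mean_equal_designs
    {Q D : Type*} [Fintype D] [DecidableEq D]
    (r1 r2 : Q → Q → ℝ) (hr1 : ∀ x y, r1 x y = r1 y x) (hr2 : ∀ x y, r2 x y = r2 y x)
    (σ1sq σ2sq : ℝ) (hσ1 : 0 < σ1sq) (hσ2 : 0 < σ2sq) (ρ : ℝ) (e : D → Q)
    (R1 R2 : Matrix D D ℝ)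
    (hR1 : R1 = Matrix.of fun d d' => r1 (e d) (e d'))
    (hR2 : R2 = Matrix.of fun d d' => r2 (e d) (e d'))
    (hR1inv : IsUnit R1.det) (hR2inv : IsUnit R2.det)
    (Γ : Matrix (D ⊕ D) (D ⊕ D) ℝ)
    (hΓ : Γ = Matrix.fromBlocks (σ1sq • R1) ((ρ * σ1sq) • R1) ((ρ * σ1sq) • R1)
        ((ρ ^ 2 * σ1sq) • R1 + σ2sq • R2))
    (hΓinv : IsUnit Γ.det)
    (v : Q → D ⊕ D → ℝ)
    (hv : v = fun x => Sum.elim (fun d => ρ * σ1sq * r1 x (e d))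
        (fun d => ρ ^ 2 * σ1sq * r1 x (e d) + σ2sq * r2 x (e d)))
    (z1 z2 : D → ℝ) (x : Q) :
    v x ⬝ᵥ Γ⁻¹.mulVec (Sum.elim z1 z2)
      = ρ * ((fun d => σ1sq * r1 x (e d)) ⬝ᵥ (σ1sq • R1)⁻¹.mulVec z1)
        + (fun d => r2 x (e d)) ⬝ᵥ R2⁻¹.mulVec (z2 - ρ • z1) := by
  -- symmetry facts
  have hR1sym : R1ᵀ = R1 := by
    rw [hR1]; ext i j; simp [Matrix.transpose_apply, hr1]
  have hR2sym : R2ᵀ = R2 := by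
    rw [hR2]; ext i j; simp [Matrix.transpose_apply, hr2]
  have hΓsym : Γᵀ = Γ := by
    rw [hΓ]; simp [Matrix.fromBlocks_transpose, Matrix.transpose_smul, Matrix.transpose_add,
      hR1sym, hR2sym]
  set r1x : D → ℝ := fun d => r1 x (e d) with hr1x
  set r2x : D → ℝ := fun d => r2 x (e d) with hr2x
  set a : D → ℝ := ρ • R1⁻¹.mulVec r1x - ρ • R2⁻¹.mulVec r2x with ha
  set b : D → ℝ := R2⁻¹.mulVec r2x with hb
  have c1 : ∀ w : D → ℝ, R1.mulVec (R1⁻¹.mulVec w) = w := by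
    intro w
    rw [Matrix.mulVec_mulVec, Matrix.mul_nonsing_inv _ hR1inv, Matrix.one_mulVec]
  have c2 : ∀ w : D → ℝ, R2.mulVec (R2⁻¹.mulVec w) = w := by
    intro w
    rw [Matrix.mulVec_mulVec, Matrix.mul_nonsing_inv _ hR2inv, Matrix.one_mulVec]
  -- key: Γ * u = v x
  have key : Γ.mulVec (Sum.elim a b) = v x := by
    rw [hΓ, hv]
    simp only [Matrix.fromBlocks_mulVec, Sum.elim_comp_inl, Sum.elim_comp_inr]
    have h1 : (σ1sq • R1).mulVec a + ((ρ * σ1sq) • R1).mulVec b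
        = fun d => ρ * σ1sq * r1 x (e d) := by
      rw [ha, hb]
      funext d
      simp only [Matrix.smul_mulVec, Matrix.mulVec_sub, Matrix.mulVec_smul, c1, c2,
        Pi.add_apply, Pi.smul_apply, Pi.sub_apply, smul_eq_mul]
      ring
    have h2 : ((ρ * σ1sq) • R1).mulVec a + ((ρ ^ 2 * σ1sq) • R1 + σ2sq • R2).mulVec b
        = fun d => ρ ^ 2 * σ1sq * r1 x (e d) + σ2sq * r2 x (e d) := by
      rw [ha, hb]
      funext d
      simp only [Matrix.add_mulVec, Matrix.smul_mulVec, Matrix.mulVec_sub,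
        Matrix.mulVec_smul, c1, c2, Pi.add_apply, Pi.smul_apply, Pi.sub_apply, smul_eq_mul]
      ring
    rw [h1, h2]
  have swap := fun (A : Matrix D D ℝ) hA w z => symm_mulVec_dot A hA w z
  have hR1invsym : (R1⁻¹)ᵀ = R1⁻¹ := by rw [Matrix.transpose_nonsing_inv, hR1sym]
  have hR2invsym : (R2⁻¹)ᵀ = R2⁻¹ := by rw [Matrix.transpose_nonsing_inv, hR2sym]
  -- main computation
  have main : v x ⬝ᵥ Γ⁻¹.mulVec (Sum.elim z1 z2) = Sum.elim a b ⬝ᵥ Sum.elim z1 z2 := by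
    rw [← key]
    calc Γ.mulVec (Sum.elim a b) ⬝ᵥ Γ⁻¹.mulVec (Sum.elim z1 z2)
        = Sum.elim a b ⬝ᵥ Γ.mulVec (Γ⁻¹.mulVec (Sum.elim z1 z2)) :=
          symm_mulVec_dot Γ hΓsym _ _
      _ = Sum.elim a b ⬝ᵥ Sum.elim z1 z2 := by
          rw [Matrix.mulVec_mulVec, Matrix.mul_nonsing_inv _ hΓinv, Matrix.one_mulVec]
  rw [main, sumElim_dotProduct_sumElim]
  -- simplify RHS inverse of scaled matrix
  have hsmulinv : (σ1sq • R1)⁻¹ = σ1sq⁻¹ • R1⁻¹ :=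
    Matrix.inv_eq_right_inv (by
      rw [Matrix.smul_mul, Matrix.mul_smul, smul_smul, mul_inv_cancel₀ hσ1.ne',
        Matrix.mul_nonsing_inv _ hR1inv, one_smul])
  have hterm1 : ρ * ((fun d => σ1sq * r1 x (e d)) ⬝ᵥ (σ1sq • R1)⁻¹.mulVec z1)
      = ρ * (r1x ⬝ᵥ R1⁻¹.mulVec z1) := by
    rw [hsmulinv]
    congr 1
    rw [Matrix.smul_mulVec]
    show (σ1sq • r1x) ⬝ᵥ (σ1sq⁻¹ • R1⁻¹.mulVec z1) = _
    rw [smul_dotProduct, dotProduct_smul, smul_eq_mul, smul_eq_mul,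
      ← mul_assoc, mul_inv_cancel₀ hσ1.ne', one_mul]
  rw [hterm1]
  -- now pure dot-product algebra
  rw [ha, hb]
  have e1 : (ρ • R1⁻¹.mulVec r1x - ρ • R2⁻¹.mulVec r2x) ⬝ᵥ z1
      = ρ * (R1⁻¹.mulVec r1x ⬝ᵥ z1) - ρ * (R2⁻¹.mulVec r2x ⬝ᵥ z1) := by
    rw [sub_dotProduct, smul_dotProduct, smul_dotProduct]; rfl
  have e2 : R2⁻¹.mulVec r2x ⬝ᵥ (z2 - ρ • z1) -- helper below
      = R2⁻¹.mulVec r2x ⬝ᵥ z2 - ρ * (R2⁻¹.mulVec r2x ⬝ᵥ z1) := by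
    rw [dotProduct_sub, dotProduct_smul]; rfl
  have s1 : R1⁻¹.mulVec r1x ⬝ᵥ z1 = r1x ⬝ᵥ R1⁻¹.mulVec z1 := by
    have := swap R1⁻¹ hR1invsym r1x z1; exact this
  have s2 : R2⁻¹.mulVec r2x ⬝ᵥ z1 = r2x ⬝ᵥ R2⁻¹.mulVec z1 := swap R2⁻¹ hR2invsym r2x z1
  have s3 : R2⁻¹.mulVec r2x ⬝ᵥ z2 = r2x ⬝ᵥ R2⁻¹.mulVec z2 := swap R2⁻¹ hR2invsym r2x z2
  have e3 : r2x ⬝ᵥ R2⁻¹.mulVec (z2 - ρ • z1)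
      = r2x ⬝ᵥ R2⁻¹.mulVec z2 - ρ * (r2x ⬝ᵥ R2⁻¹.mulVec z1) := by
    rw [Matrix.mulVec_sub, Matrix.mulVec_smul, dotProduct_sub, dotProduct_smul]
    rfl
  rw [e1, e3, s1, s2, s3]
  ring
end
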